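/- Let (X, 𝔅, μ) be a σ-finite measure space and let E be an energy form on (X, μ). Let f, g ∈ D(E) with f ≥ 0 μ-a.e., g ≥ 0 μ-a.e. and min(f, g) = 0 μ-a.e. Then E(f, g) ≤ 0, where E(f, g) := (E(f+g) − E(f−g))/4 is the polarized bilinear form computed from the finite real values of E(f+g) and E(f−g). If, in addition, f̃, g̃ ∈ D(E) satisfy 0 ≤ f̃ ≤ f and 0 ≤ g̃ ≤ g μ-a.e., then E(f, g) ≤ E(f̃, g̃). -/

import Mathlib

open Filter MeasureTheory Topology
open scoped ENNReal

/-- Local convergence in `μ`-measure of a net (indexed by `ι`, along the filter `l`)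
of functions `F i : X → ℝ` to `f : X → ℝ`. -/
def TendstoLocInMeasure {X : Type*} [MeasurableSpace X] (μ : Measure X)
    {ι : Type*} (l : Filter ι) (F : ι → X → ℝ) (f : X → ℝ) : Prop :=
  ∀ U : Set X, MeasurableSet U → μ U < ⊤ → ∀ ε : ℝ, 0 < ε →
    Tendsto (fun i => μ (U ∩ {x | ε ≤ |F i x - f x|})) l (𝓝 0)

/-- An energy form on `(X, μ)`: a map `E : (X → ℝ) → [0,∞]` which (1) only depends on
`μ`-equivalence classes, (2) is a quadratic form (parallelogram identity and homogeneity),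
(3) is lower semicontinuous with respect to local convergence in `μ`-measure of nets, and
(4) satisfies `E (C ∘ f) ≤ E f` for every normal contraction `C : ℝ → ℝ`. -/
def IsEnergyForm {X : Type*} [MeasurableSpace X] (μ : Measure X)
    (E : (X → ℝ) → ℝ≥0∞) : Prop :=
  (∀ f g : X → ℝ, f =ᵐ[μ] g → E f = E g) ∧
  (∀ f g : X → ℝ, 2 * E f + 2 * E g = E (f + g) + E (f - g)) ∧
  (∀ (c : ℝ) (f : X → ℝ), E (c • f) = ENNReal.ofReal (c ^ 2) * E f) ∧
  (∀ (ι : Type*) [Preorder ι] [IsDirected ι (· ≤ ·)] [Nonempty ι]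
    (F : ι → X → ℝ) (f : X → ℝ), TendstoLocInMeasure μ atTop F f →
      E f ≤ liminf (fun i => E (F i)) atTop) ∧
  (∀ C : ℝ → ℝ, C 0 = 0 → (∀ x y : ℝ, |C x - C y| ≤ |x - y|) →
    ∀ f : X → ℝ, E (C ∘ f) ≤ E f)

/-- The polarized bilinear form `E(f,g) = (E(f+g) - E(f-g))/4`, computed from the finite
real values of `E (f+g)` and `E (f-g)`. -/
noncomputable def polarForm {X : Type*} (E : (X → ℝ) → ℝ≥0∞) (f g : X → ℝ) : ℝ :=
  ((E (f + g)).toReal - (E (f - g)).toReal) / 4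

/-!
On the set where `g = 0` one has `(f + g) ± (f' - g') = |(f - g) ± (f' + g')|`, and likewise where
`f = 0`. The parallelogram law together with `E |h| ≤ E h` then gives
`E (f + g) + E (f' - g') ≤ E (f - g) + E (f' + g')`, which is the monotonicity of the polarized
form; nonpositivity is the case `f' = g' = 0`.
-/

lemma abs_sub_add_add_eq_of_eq_zero_or {a b a' b' : ℝ} (hab : a = 0 ∨ b = 0)
    (ha' : 0 ≤ a' ∧ a' ≤ a) (hb' : 0 ≤ b' ∧ b' ≤ b) :
    |(a - b) + (a' + b')| = (a + b) + (a' - b') ∧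
      |(a - b) - (a' + b')| = (a + b) - (a' - b') := by
  obtain ⟨ha'₀, ha'a⟩ := ha'
  obtain ⟨hb'₀, hb'b⟩ := hb'
  rcases hab with rfl | rfl
  · have : a' = 0 := le_antisymm ha'a ha'₀
    subst this
    constructor <;> rw [abs_of_nonpos (by linarith)] <;> ring
  · have : b' = 0 := le_antisymm hb'b hb'₀
    subst this
    constructor <;> rw [abs_of_nonneg (by linarith)] <;> ring

namespace IsEnergyForm

variable {X : Type*} [MeasurableSpace X] {μ : Measure X} {E : (X → ℝ) → ℝ≥0∞}

lemma congr_ae (hE : IsEnergyForm μ E) {f g : X → ℝ} (h : f =ᵐ[μ] g) : E f = E g :=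
  hE.1 f g h

lemma parallelogram (hE : IsEnergyForm μ E) (f g : X → ℝ) :
    2 * E f + 2 * E g = E (f + g) + E (f - g) :=
  hE.2.1 f g

lemma map_zero (hE : IsEnergyForm μ E) : E 0 = 0 := by
  simpa using hE.2.2.1 0 0

lemma abs_le (hE : IsEnergyForm μ E) (f : X → ℝ) : E (fun x => |f x|) ≤ E f :=
  hE.2.2.2.2 (fun x => |x|) abs_zero abs_abs_sub_abs_le_abs_sub f

lemma add_add_sub_lt_top (hE : IsEnergyForm μ E) {f g : X → ℝ} (hf : E f < ⊤)
    (hg : E g < ⊤) :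
    E (f + g) + E (f - g) < ⊤ := by
  rw [← hE.parallelogram f g]
  exact ENNReal.add_lt_top.2
    ⟨ENNReal.mul_lt_top ENNReal.ofNat_lt_top hf, ENNReal.mul_lt_top ENNReal.ofNat_lt_top hg⟩

lemma add_add_sub_le {f g f' g' : X → ℝ} (hE : IsEnergyForm μ E)
    (hfg : ∀ᵐ x ∂μ, f x = 0 ∨ g x = 0)
    (hf' : ∀ᵐ x ∂μ, 0 ≤ f' x ∧ f' x ≤ f x)
    (hg' : ∀ᵐ x ∂μ, 0 ≤ g' x ∧ g' x ≤ g x) :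
    E (f + g) + E (f' - g') ≤ E (f - g) + E (f' + g') := by
  have habs := (hfg.and (hf'.and hg')).mono fun x ⟨hx, hf'x, hg'x⟩ =>
    abs_sub_add_add_eq_of_eq_zero_or hx hf'x hg'x
  have hplus : (f + g) + (f' - g') =ᵐ[μ] fun x => |((f - g) + (f' + g')) x| :=
    habs.mono fun x hx => hx.1.symm
  have hminus : (f + g) - (f' - g') =ᵐ[μ] fun x => |((f - g) - (f' + g')) x| :=
    habs.mono fun x hx => hx.2.symm
  refine (ENNReal.mul_le_mul_iff_right (two_ne_zero (α := ℝ≥0∞)) ENNReal.ofNat_ne_top).1 ?_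
  calc 2 * (E (f + g) + E (f' - g'))
      = E ((f + g) + (f' - g')) + E ((f + g) - (f' - g')) := by rw [mul_add, hE.parallelogram]
    _ = E (fun x => |((f - g) + (f' + g')) x|) + E (fun x => |((f - g) - (f' + g')) x|) := by
      rw [hE.congr_ae hplus, hE.congr_ae hminus]
    _ ≤ E ((f - g) + (f' + g')) + E ((f - g) - (f' + g')) :=
      add_le_add (hE.abs_le _) (hE.abs_le _)
    _ = 2 * (E (f - g) + E (f' + g')) := by rw [mul_add, hE.parallelogram]

lemma polarForm_le {f g f' g' : X → ℝ} (hE : IsEnergyForm μ E) (hf : E f < ⊤)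
    (hg : E g < ⊤)
    (hf'fin : E f' < ⊤) (hg'fin : E g' < ⊤) (hfg : ∀ᵐ x ∂μ, f x = 0 ∨ g x = 0)
    (hf' : ∀ᵐ x ∂μ, 0 ≤ f' x ∧ f' x ≤ f x)
    (hg' : ∀ᵐ x ∂μ, 0 ≤ g' x ∧ g' x ≤ g x) :
    polarForm E f g ≤ polarForm E f' g' := by
  obtain ⟨hadd, hsub⟩ := ENNReal.add_lt_top.1 (hE.add_add_sub_lt_top hf hg)
  obtain ⟨hadd', hsub'⟩ := ENNReal.add_lt_top.1 (hE.add_add_sub_lt_top hf'fin hg'fin)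
  have h := ENNReal.toReal_mono (ENNReal.add_lt_top.2 ⟨hsub, hadd'⟩).ne
    (hE.add_add_sub_le hfg hf' hg')
  rw [ENNReal.toReal_add hadd.ne hsub'.ne, ENNReal.toReal_add hsub.ne hadd'.ne] at h
  unfold polarForm
  linarith

lemma polarForm_zero (hE : IsEnergyForm μ E) : polarForm E (0 : X → ℝ) 0 = 0 := by
  simp [polarForm, hE.map_zero]

end IsEnergyForm

theorem stmt_10_general {X : Type*} [MeasurableSpace X] (μ : Measure X)
    (E : (X → ℝ) → ℝ≥0∞) (hE : IsEnergyForm μ E)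
    (f g : X → ℝ) (hf : E f < ⊤) (hg : E g < ⊤)
    (hdisj : ∀ᵐ x ∂μ, min (f x) (g x) = 0) :
    polarForm E f g ≤ 0 ∧
      ∀ f' g' : X → ℝ, E f' < ⊤ → E g' < ⊤ →
        (∀ᵐ x ∂μ, 0 ≤ f' x ∧ f' x ≤ f x) → (∀ᵐ x ∂μ, 0 ≤ g' x ∧ g' x ≤ g x) →
          polarForm E f g ≤ polarForm E f' g' := by
  have hfg : ∀ᵐ x ∂μ, f x = 0 ∨ g x = 0 := hdisj.mono fun x hx =>
    (min_choice (f x) (g x)).imp (fun h => h.symm.trans hx) (fun h => h.symm.trans hx)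
  refine ⟨?_, fun f' g' hf'fin hg'fin => hE.polarForm_le hf hg hf'fin hg'fin hfg⟩
  calc polarForm E f g
      ≤ polarForm E 0 0 := hE.polarForm_le hf hg (hE.map_zero ▸ ENNReal.zero_lt_top)
        (hE.map_zero ▸ ENNReal.zero_lt_top) hfg
        (hdisj.mono fun x hx => ⟨le_rfl, (le_min_iff.1 hx.ge).1⟩)
        (hdisj.mono fun x hx => ⟨le_rfl, (le_min_iff.1 hx.ge).2⟩)
    _ = 0 := hE.polarForm_zero

/-- for nonnegative functions of disjoint support in the domain of an energy
form, the polarized form is nonpositive, and it is monotone under shrinking the functions. -/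
theorem stmt_10 {X : Type*} [MeasurableSpace X] (μ : Measure X) [SigmaFinite μ]
    (E : (X → ℝ) → ℝ≥0∞) (hE : IsEnergyForm μ E)
    (f g : X → ℝ) (hf : E f < ⊤) (hg : E g < ⊤)
    (hf0 : ∀ᵐ x ∂μ, 0 ≤ f x) (hg0 : ∀ᵐ x ∂μ, 0 ≤ g x)
    (hdisj : ∀ᵐ x ∂μ, min (f x) (g x) = 0) :
    polarForm E f g ≤ 0 ∧
      ∀ f' g' : X → ℝ, E f' < ⊤ → E g' < ⊤ →
        (∀ᵐ x ∂μ, 0 ≤ f' x ∧ f' x ≤ f x) → (∀ᵐ x ∂μ, 0 ≤ g' x ∧ g' x ≤ g x) →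
          polarForm E f g ≤ polarForm E f' g' :=
  stmt_10_general μ E hE f g hf hg hdisj
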